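/- Every normal set A ⊆ ℕ contains elements x, y such that x² + y² is a perfect square. -/

import Mathlib

open scoped Classical

/-- A set of natural numbers is *normal* if every nonempty binary word `w` occurs
in the indicator sequence of `A` (read off at positions 1, 2, 3, ...) with
asymptotic frequency `2 ^ (-|w|)`. -/
def IsNormalSet (A : Set ℕ) : Prop :=
  ∀ w : List Bool, w ≠ [] →
    Filter.Tendsto
      (fun N : ℕ =>
        (((Finset.Icc 1 N).filter fun n =>
            ∀ i : Fin w.length, (n + (i : ℕ) ∈ A ↔ w.get i = true)).card : ℝ) / N)
      Filter.atTop (nhds (1 / 2 ^ w.length))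

/-- `S` has natural density `d`. -/
def HasDensity (S : Set ℕ) (d : ℝ) : Prop :=
  Filter.Tendsto
    (fun N : ℕ => (((Finset.Icc 1 N).filter fun n => n ∈ S).card : ℝ) / N)
    Filter.atTop (nhds d)

open Filter Finset Topology

/-!
Normality gives every finite pattern of memberships `n + i ∈ A` (`i ∈ s`) density `2 ^ (-#s)`;
in particular `A` has density `1/2` and `{n | n ∈ A ∧ n + d ∈ A}` has density `1/4` for `d ≠ 0`,
so `F = 1_A - 1/2` has Cesàro correlations `0` at every nonzero lag. A van der Corput argument
(average `F` over `K` consecutive points of `a ℕ`, then Cauchy–Schwarz) upgrades this to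
`F (a t)` having Cesàro mean `0`, i.e. every dilate `{t | a * t ∈ A}` has density `1/2`.
Since `44² + 117² = 125²`, `44² + 240² = 244²` and `117² + 240² = 267²`, if no two elements
of `A` had a square sum of squares, the dilates of `A` by `44`, `117`, `240` would be pairwise
disjoint sets of density `1/2`, which is impossible.
-/

noncomputable def cesaroMean (g : ℕ → ℝ) (N : ℕ) : ℝ := (∑ n ∈ range N, g n) / N

section Cesaro

variable {g : ℕ → ℝ} {C : ℝ}

lemma abs_sum_le_card_mul {ι : Type*} (s : Finset ι) {f : ι → ℝ} (hf : ∀ i, |f i| ≤ C) :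
    |∑ i ∈ s, f i| ≤ #s * C := by
  simpa using norm_sum_le_of_le s fun i _ => (Real.norm_eq_abs (f i)).trans_le (hf i)

lemma abs_sum_range_add_sub_le (hg : ∀ n, |g n| ≤ C) (k N : ℕ) :
    |∑ n ∈ range N, g (n + k) - ∑ n ∈ range N, g n| ≤ 2 * k * C := by
  have hsplit : ∑ n ∈ range N, g (n + k) - ∑ n ∈ range N, g n =
      ∑ x ∈ range k, g (N + x) - ∑ x ∈ range k, g x := by
    have h₁ := sum_range_add g N k
    have h₂ := sum_range_add g k N
    simp only [add_comm k] at h₂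
    linarith
  rw [hsplit]
  calc _ ≤ |∑ x ∈ range k, g (N + x)| + |∑ x ∈ range k, g x| := abs_sub _ _
    _ ≤ k * C + k * C := by
      simpa using add_le_add (abs_sum_le_card_mul (range k) fun x => hg (N + x))
        (abs_sum_le_card_mul (range k) hg)
    _ = 2 * k * C := by ring

lemma tendsto_cesaroMean_add_iff (hg : ∀ n, |g n| ≤ C) (k : ℕ) {c : ℝ} :
    Tendsto (cesaroMean fun n => g (n + k)) atTop (𝓝 c) ↔
      Tendsto (cesaroMean g) atTop (𝓝 c) := by
  have hdiff : Tendsto (fun N => cesaroMean (fun n => g (n + k)) N - cesaroMean g N)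
      atTop (𝓝 0) := by
    refine squeeze_zero_norm (fun N => ?_) (tendsto_const_div_atTop_nhds_zero_nat (2 * k * C))
    rw [cesaroMean, cesaroMean, ← sub_div, Real.norm_eq_abs, abs_div, Nat.abs_cast]
    exact div_le_div_of_nonneg_right (abs_sum_range_add_sub_le hg k N) N.cast_nonneg
  constructor
  · intro h
    simpa using h.sub hdiff
  · intro h
    simpa using h.add hdiff

end Cesaro

section VanDerCorput

variable {F : ℕ → ℝ} {a : ℕ}

noncomputable def progressionSum (F : ℕ → ℝ) (a K m : ℕ) : ℝ := ∑ k ∈ range K, F (m + a * k)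

lemma abs_mul_le_one (hF : ∀ n, |F n| ≤ 1) (m n : ℕ) : |F m * F n| ≤ 1 := by
  rw [abs_mul]
  exact mul_le_one₀ (hF m) (abs_nonneg _) (hF n)

lemma tendsto_cesaroMean_mul_add_of_ne (hF : ∀ n, |F n| ≤ 1)
    (hcorr : ∀ d ≠ 0, Tendsto (cesaroMean fun n => F n * F (n + d)) atTop (𝓝 0))
    {i j : ℕ} (hij : i ≠ j) :
    Tendsto (cesaroMean fun m => F (m + i) * F (m + j)) atTop (𝓝 0) := by
  wlog hlt : i < j generalizing i j
  · simpa only [mul_comm] using this hij.symm (by omega)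
  obtain ⟨d, rfl⟩ := Nat.exists_eq_add_of_lt hlt
  have := (tendsto_cesaroMean_add_iff (fun n => abs_mul_le_one hF n (n + (d + 1))) i).2
    (hcorr (d + 1) d.succ_ne_zero)
  simpa only [add_assoc] using this

lemma abs_mul_sum_sub_sum_progressionSum_le (hF : ∀ n, |F n| ≤ 1) (a K N : ℕ) :
    |K * ∑ t ∈ range N, F (a * t) - ∑ t ∈ range N, progressionSum F a K (a * t)| ≤
      2 * K ^ 2 := by
  have hR : ∑ t ∈ range N, progressionSum F a K (a * t) =
      ∑ k ∈ range K, ∑ t ∈ range N, F (a * (t + k)) := by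
    simp only [progressionSum, mul_add]
    exact sum_comm
  have hKS : (K : ℝ) * ∑ t ∈ range N, F (a * t) = ∑ _k ∈ range K, ∑ t ∈ range N, F (a * t) := by
    simp
  rw [hR, hKS, ← sum_sub_distrib]
  calc _ ≤ ∑ k ∈ range K, |∑ t ∈ range N, F (a * t) - ∑ t ∈ range N, F (a * (t + k))| :=
        abs_sum_le_sum_abs _ _
    _ ≤ ∑ k ∈ range K, 2 * (K : ℝ) := by
      refine sum_le_sum fun k hk => ?_
      rw [abs_sub_comm]
      have hkK : (k : ℝ) ≤ K := by exact_mod_cast (mem_range.1 hk).le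
      have := abs_sum_range_add_sub_le (g := fun t => F (a * t)) (fun t => hF _) k N
      linarith
    _ = 2 * K ^ 2 := by simp; ring

lemma sq_sum_progressionSum_le (ha : a ≠ 0) (K N : ℕ) :
    (∑ t ∈ range N, progressionSum F a K (a * t)) ^ 2 ≤
      N * ∑ m ∈ range (a * N), progressionSum F a K m ^ 2 := by
  calc _ ≤ N * ∑ t ∈ range N, progressionSum F a K (a * t) ^ 2 := by
        simpa using sq_sum_le_card_mul_sum_sq (s := range N)
          (f := fun t => progressionSum F a K (a * t))
    _ ≤ _ := by
      gcongr
      rw [← sum_image (f := fun m => progressionSum F a K m ^ 2)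
        fun x _ y _ h => Nat.eq_of_mul_eq_mul_left (Nat.pos_of_ne_zero ha) h]
      refine sum_le_sum_of_subset_of_nonneg (fun m hm => ?_) fun _ _ _ => sq_nonneg _
      obtain ⟨t, ht, rfl⟩ := mem_image.1 hm
      exact mem_range.2 (Nat.mul_lt_mul_of_pos_left (mem_range.1 ht) (Nat.pos_of_ne_zero ha))

lemma eventually_sum_sq_progressionSum_le (hF : ∀ n, |F n| ≤ 1)
    (hcorr : ∀ d ≠ 0, Tendsto (cesaroMean fun n => F n * F (n + d)) atTop (𝓝 0))
    (ha : a ≠ 0) (K : ℕ) :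
    ∀ᶠ M in atTop, ∑ m ∈ range M, progressionSum F a K m ^ 2 ≤ (K + 1) * M := by
  set c : ℕ → ℕ → ℕ → ℝ := fun k l M =>
    if k = l then 1 else cesaroMean (fun m => F (m + a * k) * F (m + a * l)) M
  have hlim : Tendsto (fun M => ∑ k ∈ range K, ∑ l ∈ range K, c k l M) atTop (𝓝 K) := by
    have hc : ∀ k l, Tendsto (c k l) atTop (𝓝 (if k = l then 1 else 0)) := by
      intro k l
      by_cases hkl : k = l
      · simp [c, hkl]
      · simpa [c, hkl] using tendsto_cesaroMean_mul_add_of_ne hF hcorr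
          (mt (Nat.eq_of_mul_eq_mul_left (Nat.pos_of_ne_zero ha)) hkl)
    have hsum : ∑ k ∈ range K, ∑ l ∈ range K, (if k = l then (1 : ℝ) else 0) = K := by
      rw [sum_congr rfl fun k hk => by rw [sum_ite_eq, if_pos hk]]
      simp
    rw [← hsum]
    exact tendsto_finsetSum _ fun k _ => tendsto_finsetSum _ fun l _ => hc k l
  filter_upwards [hlim.eventually (gt_mem_nhds (lt_add_one (K : ℝ))), eventually_gt_atTop 0]
    with M hM hM0
  have hterm : ∀ k l, ∑ m ∈ range M, F (m + a * k) * F (m + a * l) ≤ M * c k l M := by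
    intro k l
    by_cases hkl : k = l
    · simpa [c, hkl] using sum_le_card_nsmul (range M) _ 1
        fun m _ => (le_abs_self _).trans (abs_mul_le_one hF (m + a * l) (m + a * l))
    · have : (M : ℝ) ≠ 0 := by exact_mod_cast hM0.ne'
      simp only [c, hkl, if_false, cesaroMean]
      exact (mul_div_cancel₀ _ this).ge
  calc ∑ m ∈ range M, progressionSum F a K m ^ 2
      = ∑ k ∈ range K, ∑ l ∈ range K, ∑ m ∈ range M, F (m + a * k) * F (m + a * l) := by
        simp only [progressionSum, sq, sum_mul_sum]
        rw [sum_comm]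
        exact sum_congr rfl fun k _ => sum_comm
    _ ≤ M * ∑ k ∈ range K, ∑ l ∈ range K, c k l M := by
        simp only [mul_sum]
        exact sum_le_sum fun k _ => sum_le_sum fun l _ => hterm k l
    _ ≤ (K + 1) * M := by nlinarith

lemma abs_sum_comp_mul_le (hF : ∀ n, |F n| ≤ 1) (ha : a ≠ 0) {ε : ℝ} (hε : 0 < ε) {K N : ℕ}
    (hK : 0 < K) (hKε : 8 * a ≤ ε ^ 2 * K)
    (hN : ∑ m ∈ range (a * N), progressionSum F a K m ^ 2 ≤ (K + 1) * (a * N : ℕ)) :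
    |∑ t ∈ range N, F (a * t)| ≤ ε * N / 2 + 2 * K := by
  set S := ∑ t ∈ range N, F (a * t)
  set X := ∑ t ∈ range N, progressionSum F a K (a * t)
  have hK1 : (1 : ℝ) ≤ K := by exact_mod_cast hK
  have hX : |X| ≤ ε * K * N / 2 := by
    refine abs_le_of_sq_le_sq ?_ (by positivity)
    calc X ^ 2 ≤ N * ∑ m ∈ range (a * N), progressionSum F a K m ^ 2 :=
          sq_sum_progressionSum_le ha K N
      _ ≤ N * ((K + 1) * (a * N : ℕ)) := by gcongr
      _ ≤ (ε * K * N / 2) ^ 2 := by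
        push_cast
        -- this is what the choice `8 * a ≤ ε ^ 2 * K` is for
        have : (a : ℝ) * (K + 1) ≤ (ε * K / 2) ^ 2 := by nlinarith
        nlinarith [sq_nonneg (N : ℝ)]
  have hKS : K * |S| ≤ K * (ε * N / 2 + 2 * K) := by
    have h₁ := abs_mul_sum_sub_sum_progressionSum_le hF a K N
    have h₂ := abs_sub_abs_le_abs_sub ((K : ℝ) * S) X
    rw [abs_mul, Nat.abs_cast] at h₂
    nlinarith
  exact le_of_mul_le_mul_left hKS (by positivity)

theorem tendsto_cesaroMean_comp_mul (hF : ∀ n, |F n| ≤ 1)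
    (hcorr : ∀ d ≠ 0, Tendsto (cesaroMean fun n => F n * F (n + d)) atTop (𝓝 0))
    (ha : a ≠ 0) :
    Tendsto (cesaroMean fun t => F (a * t)) atTop (𝓝 0) := by
  rw [Metric.tendsto_nhds]
  intro ε hε
  obtain ⟨K, hK⟩ := exists_nat_ge (max 1 (8 * a / ε ^ 2))
  have hK1 : 1 ≤ (K : ℝ) := le_of_max_le_left hK
  have hKε : 8 * a ≤ ε ^ 2 * K := by
    have := le_of_max_le_right hK
    rw [div_le_iff₀ (by positivity)] at this
    linarith
  have haN : Tendsto (fun N => a * N) atTop atTop :=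
    tendsto_id.const_mul_atTop' (Nat.pos_of_ne_zero ha)
  filter_upwards [haN.eventually (eventually_sum_sq_progressionSum_le hF hcorr ha K),
    tendsto_natCast_atTop_atTop.eventually_gt_atTop (4 * K / ε), eventually_gt_atTop 0]
    with N hN hNK hN0
  have hNpos : (0 : ℝ) < N := by exact_mod_cast hN0
  have hbound := abs_sum_comp_mul_le hF ha hε (by exact_mod_cast hK1) hKε hN
  rw [Real.dist_eq, sub_zero, cesaroMean, abs_div, Nat.abs_cast, div_lt_iff₀ hNpos]
  rw [div_lt_iff₀ hε] at hNK
  linarith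

end VanDerCorput

section Density

variable {S T : Set ℕ} {d e : ℝ}

lemma abs_indicator_one_le_one (S : Set ℕ) (n : ℕ) : |(S.indicator 1 n : ℝ)| ≤ 1 := by
  by_cases hn : n ∈ S <;> simp [hn]

lemma HasDensity.union (hS : HasDensity S d) (hT : HasDensity T e) (hST : Disjoint S T) :
    HasDensity (S ∪ T) (d + e) := by
  refine (hS.add hT).congr fun N => ?_
  have hdisj : Disjoint {n ∈ Icc 1 N | n ∈ S} {n ∈ Icc 1 N | n ∈ T} :=
    disjoint_filter_filter' _ _ hST
  rw [← add_div, ← Nat.cast_add, ← card_union_of_disjoint hdisj, ← filter_or]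
  simp only [Set.mem_union]

lemma HasDensity.le_one (hS : HasDensity S d) : d ≤ 1 := by
  refine le_of_tendsto hS (Eventually.of_forall fun N => div_le_one_of_le₀ ?_ N.cast_nonneg)
  exact_mod_cast (card_filter_le _ _).trans (by simp)

lemma hasDensity_iff_tendsto_cesaroMean :
    HasDensity S d ↔ Tendsto (cesaroMean (S.indicator 1)) atTop (𝓝 d) := by
  rw [← tendsto_cesaroMean_add_iff (abs_indicator_one_le_one S) 1]
  unfold HasDensity cesaroMean
  congr! 3 with N
  rw [range_eq_Ico, sum_Ico_add' (fun n => S.indicator (1 : ℕ → ℝ) n), zero_add,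
    Ico_add_one_right_eq_Icc]
  simp [Set.indicator_apply]

end Density

def patternSet (A : Set ℕ) (s : Finset ℕ) (B : Set ℕ) : Set ℕ :=
  {n | ∀ i ∈ s, (n + i ∈ A ↔ i ∈ B)}

lemma patternSet_eq_union (A : Set ℕ) {s : Finset ℕ} {j : ℕ} (hj : j ∉ s) (B : Set ℕ) :
    patternSet A s B =
      patternSet A (insert j s) (insert j B) ∪ patternSet A (insert j s) (B \ {j}) := by
  ext n
  have hB : ∀ i ∈ s, (i ∈ insert j B ↔ i ∈ B) ∧ (i ∈ B \ {j} ↔ i ∈ B) := fun i hi => by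
    have : i ≠ j := ne_of_mem_of_not_mem hi hj
    simp [this]
  simp only [patternSet, Set.mem_union, Set.mem_ofPred_eq, forall_mem_insert]
  by_cases hn : n + j ∈ A <;> simp +contextual [hn, hB]

lemma disjoint_patternSet_insert (A : Set ℕ) (s : Finset ℕ) (j : ℕ) (B : Set ℕ) :
    Disjoint (patternSet A (insert j s) (insert j B)) (patternSet A (insert j s) (B \ {j})) :=
  Set.disjoint_left.2 fun n h₁ h₂ => by
    simpa using (h₁ j (mem_insert_self j s)).symm.trans (h₂ j (mem_insert_self j s))

lemma abs_indicator_one_sub_half_le_one (A : Set ℕ) (n : ℕ) :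
    |(A.indicator 1 n - 1 / 2 : ℝ)| ≤ 1 := by
  by_cases hn : n ∈ A <;> norm_num [hn, abs_le]

namespace IsNormalSet

variable {A : Set ℕ}

lemma hasDensity_patternSet_range (hA : IsNormalSet A) {L : ℕ} (hL : 0 < L) (B : Set ℕ) :
    HasDensity (patternSet A (range L) B) ((1 / 2) ^ L) := by
  set w := List.ofFn fun i : Fin L => decide ((i : ℕ) ∈ B)
  have hw : w ≠ [] := by simp [w]; omega
  unfold HasDensity
  convert hA w hw using 5 with N
  · ext n
    simp [patternSet, w, Fin.forall_iff]
  · simp [w]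

lemma hasDensity_patternSet (hA : IsNormalSet A) (s : Finset ℕ) (B : Set ℕ) :
    HasDensity (patternSet A s B) ((1 / 2) ^ #s) := by
  set L := s.sup id + 1
  -- fill in the gaps of `s` inside `range L` one position at a time
  suffices key : ∀ t s' : Finset ℕ, ∀ B, Disjoint s' t → s' ∪ t = range L →
      HasDensity (patternSet A s' B) ((1 / 2) ^ #s') by
    refine key (range L \ s) s B disjoint_sdiff (union_sdiff_of_subset fun i hi => ?_)
    exact mem_range.2 (Nat.lt_succ_of_le (le_sup (f := id) hi))
  intro t
  induction t using Finset.induction_on with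
  | empty =>
    intro s' B _ hs'
    rw [union_empty] at hs'
    subst hs'
    rw [card_range]
    exact hA.hasDensity_patternSet_range (Nat.succ_pos _) B
  | insert j t hjt ih =>
    intro s' B hdisj hs'
    have hjs : j ∉ s' := disjoint_right.1 hdisj (mem_insert_self j t)
    have hdisj' : Disjoint (insert j s') t :=
      disjoint_insert_left.2 ⟨hjt, (disjoint_insert_right.1 hdisj).2⟩
    have hs'' : insert j s' ∪ t = range L := by rw [insert_union, ← union_insert, hs']
    have h := (ih _ (insert j B) hdisj' hs'').union (ih _ (B \ {j}) hdisj' hs'')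
      (disjoint_patternSet_insert A s' j B)
    rw [patternSet_eq_union A hjs B]
    convert h using 1
    rw [card_insert_of_notMem hjs, pow_succ]
    ring

lemma hasDensity_self (hA : IsNormalSet A) : HasDensity A (1 / 2) := by
  have h := hA.hasDensity_patternSet {0} {0}
  rwa [card_singleton, pow_one, show patternSet A {0} {0} = A by ext; simp [patternSet]] at h

lemma hasDensity_mem_and_add_mem (hA : IsNormalSet A) {d : ℕ} (hd : d ≠ 0) :
    HasDensity {n | n ∈ A ∧ n + d ∈ A} (1 / 4) := by
  have h := hA.hasDensity_patternSet {0, d} {0, d}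
  rw [card_pair hd.symm] at h
  norm_num at h
  convert h using 1
  ext n
  simp [patternSet]

lemma tendsto_cesaroMean_centered_mul (hA : IsNormalSet A) {d : ℕ} (hd : d ≠ 0) :
    Tendsto (cesaroMean fun n => (A.indicator 1 n - 1 / 2) * (A.indicator 1 (n + d) - 1 / 2))
      atTop (𝓝 0) := by
  have hpair := hasDensity_iff_tendsto_cesaroMean.1 (hA.hasDensity_mem_and_add_mem hd)
  have hself := hasDensity_iff_tendsto_cesaroMean.1 hA.hasDensity_self
  have hshift := (tendsto_cesaroMean_add_iff (abs_indicator_one_le_one A) d).2 hself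
  have hlim := ((hpair.sub (hself.const_mul (1 / 2))).sub (hshift.const_mul (1 / 2))).add_const
    (1 / 4)
  norm_num at hlim
  refine hlim.congr' ((eventually_ne_atTop 0).mono fun N hN => ?_)
  have hpt : ∀ n, ((A.indicator 1 n - 1 / 2) * (A.indicator 1 (n + d) - 1 / 2) : ℝ) =
      {n | n ∈ A ∧ n + d ∈ A}.indicator 1 n - 1 / 2 * A.indicator 1 n
        - 1 / 2 * A.indicator 1 (n + d) + 1 / 4 := fun n => by
    by_cases h₁ : n ∈ A <;> by_cases h₂ : n + d ∈ A <;> simp [h₁, h₂] <;> norm_num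
  have hN' : (N : ℝ) ≠ 0 := by exact_mod_cast hN
  simp only [cesaroMean, hpt, sum_add_distrib, sum_sub_distrib, ← mul_sum, sum_const, card_range]
  field_simp
  ring

lemma hasDensity_preimage_mul (hA : IsNormalSet A) {a : ℕ} (ha : a ≠ 0) :
    HasDensity {t | a * t ∈ A} (1 / 2) := by
  have h := (tendsto_cesaroMean_comp_mul (abs_indicator_one_sub_half_le_one A)
    (fun d hd => hA.tendsto_cesaroMean_centered_mul hd) ha).add_const (1 / 2)
  rw [zero_add] at h
  rw [hasDensity_iff_tendsto_cesaroMean]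
  refine h.congr' ((eventually_ne_atTop 0).mono fun N hN => ?_)
  have hN' : (N : ℝ) ≠ 0 := by exact_mod_cast hN
  have hind : ∀ t, ({t | a * t ∈ A}.indicator 1 t : ℝ) = A.indicator 1 (a * t) := fun t => by
    by_cases ht : a * t ∈ A <;> simp [ht]
  simp only [cesaroMean, hind, sum_sub_distrib, sum_const, card_range, nsmul_eq_mul]
  field_simp
  ring

end IsNormalSet

theorem normal_set_sum_of_squares (A : Set ℕ) (hA : IsNormalSet A) :
    ∃ x ∈ A, ∃ y ∈ A, IsSquare (x ^ 2 + y ^ 2) := by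
  by_contra! h
  have hdisj : ∀ p q c : ℕ, p ^ 2 + q ^ 2 = c ^ 2 → Disjoint {t | p * t ∈ A} {t | q * t ∈ A} :=
    fun p q c hpqc => Set.disjoint_left.2 fun t hp hq => h _ hp _ hq ⟨c * t, by
      rw [mul_pow, mul_pow, ← add_mul, hpqc]; ring⟩
  have h44 := hA.hasDensity_preimage_mul (a := 44) (by norm_num)
  have h117 := hA.hasDensity_preimage_mul (a := 117) (by norm_num)
  have h240 := hA.hasDensity_preimage_mul (a := 240) (by norm_num)
  have := ((h44.union h117 (hdisj 44 117 125 rfl)).union h240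
    (Set.disjoint_union_left.2 ⟨hdisj 44 240 244 rfl, hdisj 117 240 267 rfl⟩)).le_one
  norm_num at this
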